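/- Consider N agents with double-integrator dynamics y_i'' = u_i where, with ȳ = (1/N)∑_j y_j, ẏ̄ = (1/N)∑_j y_j', sharing ratios s ∈ ℝ^N with ∑_i s_i = 1, target y_t ∈ ℝ, and η > 0, each agent applies the control law u_i = ÿ̄ + (ȳ − y_i) + η(ẏ̄ − y_i') − y_t(1/N − s_i), with task-level input ÿ̄ = α_d z̄ + γ_d y_t − (1/2) B_cᵀ P (z̄ − z̄_d), where z̄ = (ȳ, ẏ̄)ᵀ, z̄_d solves the desired dynamics z̄_d' = A_c z̄_d + B_c(α_d z̄_d + γ_d y_t), and P = Pᵀ is positive definite solving P(A_c + B_c α_d) + (A_c + B_c α_d)ᵀ P − P B_c B_cᵀ P + Q = 0 for some symmetric positive definite Q. Then, as t → ∞: (i) z̄(t) − z̄_d(t) → 0 (the averaged output converges to the desired trajectory), and (ii) Π y(t) → y_t Π s (each agent's output deviation from its share of the task reaches consensus). -/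

import Mathlib

open Matrix Filter

open Real

lemma quad_smul {n : ℕ} (A : Matrix (Fin n) (Fin n) ℝ) (a : ℝ) (v : Fin n → ℝ) :
    (a • v) ⬝ᵥ A.mulVec (a • v) = a ^ 2 * (v ⬝ᵥ A.mulVec v) := by
  rw [mulVec_smul, dotProduct_smul, smul_dotProduct, smul_eq_mul, smul_eq_mul]
  ring

lemma quad_cont {n : ℕ} (A : Matrix (Fin n) (Fin n) ℝ) :
    Continuous (fun v : Fin n → ℝ => v ⬝ᵥ A.mulVec v) := by
  simp only [dotProduct, mulVec]
  fun_prop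

lemma lyap_tendsto {n : ℕ} (M P Q : Matrix (Fin n) (Fin n) ℝ)
    (hP : P.PosDef) (hQ : Q.PosDef)
    (hL : P * M + Mᵀ * P = -Q)
    (x : ℝ → Fin n → ℝ)
    (hx : ∀ t, HasDerivAt x (M.mulVec (x t)) t) :
    Tendsto x atTop (nhds 0) := by
  rcases n with _ | m
  · have hx0 : x = fun _ => 0 := funext fun t => Subsingleton.elim _ _
    rw [hx0]; exact tendsto_const_nhds
  have hPq : ∀ v : Fin (m+1) → ℝ, v ≠ 0 → 0 < v ⬝ᵥ P.mulVec v := fun v hv => by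
    simpa using hP.dotProduct_mulVec_pos hv
  have hQq : ∀ v : Fin (m+1) → ℝ, v ≠ 0 → 0 < v ⬝ᵥ Q.mulVec v := fun v hv => by
    simpa using hQ.dotProduct_mulVec_pos hv
  set g : (Fin (m+1) → ℝ) → ℝ := fun v => v ⬝ᵥ Q.mulVec v with hg
  set h : (Fin (m+1) → ℝ) → ℝ := fun v => v ⬝ᵥ P.mulVec v with hh
  have hSc : IsCompact (Metric.sphere (0 : Fin (m+1) → ℝ) 1) := isCompact_sphere _ _
  have hSne : (Metric.sphere (0 : Fin (m+1) → ℝ) 1).Nonempty :=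
    NormedSpace.sphere_nonempty.2 zero_le_one
  obtain ⟨vg, hvgS, hvgmin⟩ := hSc.exists_isMinOn hSne (quad_cont Q).continuousOn
  obtain ⟨vh, hvhS, hvhmax⟩ := hSc.exists_isMaxOn hSne (quad_cont P).continuousOn
  obtain ⟨vp, hvpS, hvpmin⟩ := hSc.exists_isMinOn hSne (quad_cont P).continuousOn
  have hnorm : ∀ v : Fin (m+1) → ℝ, v ∈ Metric.sphere (0 : Fin (m+1) → ℝ) 1 → ‖v‖ = 1 :=
    fun v hv => by simpa using hv
  have hne : ∀ v : Fin (m+1) → ℝ, v ∈ Metric.sphere (0 : Fin (m+1) → ℝ) 1 → v ≠ 0 :=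
    fun v hv h0 => by simp [h0] at hv
  have hcg : 0 < g vg := hQq vg (hne _ hvgS)
  have hch : 0 < h vh := hPq vh (hne _ hvhS)
  have hcp : 0 < h vp := hPq vp (hne _ hvpS)
  -- scaling claims
  have key : ∀ v : Fin (m+1) → ℝ, v ≠ 0 →
      g vg * ‖v‖ ^ 2 ≤ g v ∧ h v ≤ h vh * ‖v‖ ^ 2 ∧ h vp * ‖v‖ ^ 2 ≤ h v := by
    intro v hv
    set w : Fin (m+1) → ℝ := ‖v‖⁻¹ • v with hw
    have hvn : (0:ℝ) < ‖v‖ := norm_pos_iff.2 hv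
    have hwS : w ∈ Metric.sphere (0 : Fin (m+1) → ℝ) 1 := by
      simp [hw, norm_smul, abs_of_nonneg (inv_nonneg.2 hvn.le), inv_mul_cancel₀ hvn.ne']
    have hvw : v = ‖v‖ • w := by
      rw [hw, smul_smul, mul_inv_cancel₀ hvn.ne', one_smul]
    have hgv : g v = ‖v‖ ^ 2 * g w := by rw [hg]; conv_lhs => rw [hvw]; exact quad_smul _ _ _
    have hhv : h v = ‖v‖ ^ 2 * h w := by rw [hh]; conv_lhs => rw [hvw]; exact quad_smul _ _ _
    have h2 : (0:ℝ) < ‖v‖ ^ 2 := by positivity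
    refine ⟨?_, ?_, ?_⟩
    · have h3 : g vg ≤ g w := hvgmin hwS
      rw [hgv]; nlinarith [h3]
    · have h3 : h w ≤ h vh := hvhmax hwS
      rw [hhv]; nlinarith [h3]
    · have h3 : h vp ≤ h w := hvpmin hwS
      rw [hhv]; nlinarith [h3]
  set c : ℝ := g vg / h vh with hc
  have hcpos : 0 < c := div_pos hcg hch
  have claim1 : ∀ v : Fin (m+1) → ℝ, c * h v ≤ g v := by
    intro v
    rcases eq_or_ne v 0 with rfl | hv
    · simp [hg, hh]
    · obtain ⟨k1, k2, _⟩ := key v hv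
      have : c * h v ≤ c * (h vh * ‖v‖ ^ 2) := by
        apply mul_le_mul_of_nonneg_left k2 hcpos.le
      calc c * h v ≤ c * (h vh * ‖v‖ ^ 2) := this
        _ = g vg * ‖v‖ ^ 2 := by rw [hc, ← mul_assoc, div_mul_cancel₀ _ hch.ne']
        _ ≤ g v := k1
  have claim2 : ∀ v : Fin (m+1) → ℝ, h vp * ‖v‖ ^ 2 ≤ h v := by
    intro v
    rcases eq_or_ne v 0 with rfl | hv
    · simp [hh]
    · exact (key v hv).2.2
  have claim3 : ∀ v : Fin (m+1) → ℝ, 0 ≤ h v := by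
    intro v
    have := claim2 v
    nlinarith [sq_nonneg ‖v‖, hcp.le, mul_nonneg hcp.le (sq_nonneg ‖v‖)]
  set V : ℝ → ℝ := fun t => h (x t) with hV
  have hxi : ∀ t i, HasDerivAt (fun τ => x τ i) ((M.mulVec (x t)) i) t :=
    fun t i => (hasDerivAt_pi.1 (hx t)) i
  have hV' : ∀ t, HasDerivAt V (-g (x t)) t := by
    intro t
    have hd : HasDerivAt (fun τ => ∑ i, x τ i * ∑ j, P i j * x τ j)
        (∑ i, ((M.mulVec (x t)) i * ∑ j, P i j * x t j
          + x t i * ∑ j, P i j * (M.mulVec (x t)) j)) t := by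
      apply HasDerivAt.fun_sum
      intro i _
      exact (hxi t i).mul (HasDerivAt.fun_sum fun j _ => (hxi t j).const_mul _)
    have heq1 : V = fun τ => ∑ i, x τ i * ∑ j, P i j * x τ j := by
      funext τ
      simp [hV, hh, dotProduct, mulVec]
    have heq2 : (∑ i, ((M.mulVec (x t)) i * ∑ j, P i j * x t j
          + x t i * ∑ j, P i j * (M.mulVec (x t)) j)) = -g (x t) := by
      have e1 : (∑ i, ((M.mulVec (x t)) i * ∑ j, P i j * x t j
            + x t i * ∑ j, P i j * (M.mulVec (x t)) j))
          = (M.mulVec (x t)) ⬝ᵥ P.mulVec (x t) + x t ⬝ᵥ P.mulVec (M.mulVec (x t)) := by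
        rw [Finset.sum_add_distrib]
        simp [dotProduct, mulVec]
      rw [e1]
      have e2 : (M.mulVec (x t)) ⬝ᵥ P.mulVec (x t)
          = x t ⬝ᵥ (Mᵀ * P).mulVec (x t) := by
        rw [← mulVec_mulVec, dotProduct_mulVec (x t) Mᵀ, vecMul_transpose]
      have e3 : x t ⬝ᵥ P.mulVec (M.mulVec (x t)) = x t ⬝ᵥ (P * M).mulVec (x t) := by
        rw [mulVec_mulVec]
      rw [e2, e3, ← dotProduct_add, ← add_mulVec]
      rw [show Mᵀ * P + P * M = -Q by rw [← hL]; exact add_comm _ _]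
      simp [hg, neg_mulVec, dotProduct_neg]
    rw [heq1, ← heq2]
    exact hd
  set W : ℝ → ℝ := fun t => exp (c * t) * V t with hW
  have hW' : ∀ t, HasDerivAt W (exp (c * t) * c * V t + exp (c * t) * (-g (x t))) t := by
    intro t
    have h1 : HasDerivAt (fun τ : ℝ => c * τ) c t := by
      simpa using (hasDerivAt_id t).const_mul c
    exact (h1.exp).mul (hV' t)
  have hWanti : Antitone W := by
    apply antitone_of_deriv_nonpos (fun t => (hW' t).differentiableAt)
    intro t
    rw [(hW' t).deriv]
    have := claim1 (x t)
    have he : 0 < exp (c * t) := exp_pos _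
    nlinarith [this, he]
  have hVle : ∀ t : ℝ, 0 ≤ t → V t ≤ (exp (c * t))⁻¹ * W 0 := by
    intro t ht
    have hWt : W t ≤ W 0 := hWanti ht
    have he : 0 < exp (c * t) := exp_pos _
    calc V t = (exp (c * t))⁻¹ * (exp (c * t) * V t) := by field_simp
      _ ≤ (exp (c * t))⁻¹ * W 0 := by
          apply mul_le_mul_of_nonneg_left hWt (by positivity)
  have hub : Tendsto (fun t : ℝ => (exp (c * t))⁻¹ * W 0) atTop (nhds 0) := by
    have h1 : Tendsto (fun t : ℝ => c * t) atTop atTop :=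
      tendsto_id.const_mul_atTop hcpos
    have h2 : Tendsto (fun t : ℝ => (exp (c * t))⁻¹) atTop (nhds 0) := by
      simp only [← Real.exp_neg]
      exact Real.tendsto_exp_atBot.comp (tendsto_neg_atBot_iff.2 h1)
    simpa using h2.mul_const (W 0)
  have hVt : Tendsto V atTop (nhds 0) := by
    apply tendsto_of_tendsto_of_tendsto_of_le_of_le' tendsto_const_nhds hub
    · exact Eventually.of_forall fun t => claim3 (x t)
    · filter_upwards [eventually_ge_atTop (0:ℝ)] with t ht
      exact hVle t ht
  have hnsq : Tendsto (fun t => ‖x t‖ ^ 2) atTop (nhds 0) := by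
    have hVt' : Tendsto (fun t => V t / h vp) atTop (nhds 0) := by
      simpa using hVt.div_const (h vp)
    apply tendsto_of_tendsto_of_tendsto_of_le_of_le' tendsto_const_nhds hVt'
    · exact Eventually.of_forall fun t => sq_nonneg _
    · refine Eventually.of_forall fun t => ?_
      rw [le_div_iff₀ hcp]
      have := claim2 (x t)
      nlinarith
  have hn : Tendsto (fun t => ‖x t‖) atTop (nhds 0) := by
    have h1 := (Real.continuous_sqrt.tendsto 0).comp hnsq
    rw [Real.sqrt_zero] at h1
    have heq : (Real.sqrt ∘ fun t => ‖x t‖ ^ 2) = fun t => ‖x t‖ := by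
      funext t; simp [Function.comp, Real.sqrt_sq (norm_nonneg _)]
    rwa [heq] at h1
  exact tendsto_zero_iff_norm_tendsto_zero.2 hn

/-- For `N` double-integrator agents `y_i'' = u_i` under the control law
`u_i = ÿ̄ + (ȳ − y_i) + η(ẏ̄ − y_i') − y_t(1/N − s_i)` with task-level input
`ÿ̄ = α_d z̄ + γ_d y_t − (1/2)B_cᵀP(z̄ − z̄_d)`, where `z̄ = (ȳ, ẏ̄)ᵀ`, `z̄_d` solves the
desired dynamics, and symmetric positive definite `P` solves the Riccati equation with
weight a symmetric positive definite `Q`, one has, as `t → ∞`: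
(i) `z̄(t) − z̄_d(t) → 0`, and (ii) `Πy(t) → y_t Πs` with `Π = I − (1/N)𝟙𝟙ᵀ`. -/
theorem collaborative_tracking_convergence
    (N : ℕ) (hN : 0 < N)
    (s : Fin N → ℝ) (hs : ∑ i, s i = 1)
    (yt η : ℝ) (hη : 0 < η)
    (Ac : Matrix (Fin 2) (Fin 2) ℝ) (Bc : Fin 2 → ℝ)
    (hAc : Ac = !![0, 1; 0, 0]) (hBc : Bc = ![0, 1])
    (αd : Fin 2 → ℝ) (γd : ℝ)
    (P Q : Matrix (Fin 2) (Fin 2) ℝ)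
    (hP : P.PosDef) (hPsymm : Pᵀ = P)
    (hQ : Q.PosDef) (hQsymm : Qᵀ = Q)
    (hRiccati : P * (Ac + vecMulVec Bc αd) + (Ac + vecMulVec Bc αd)ᵀ * P
        - P * vecMulVec Bc Bc * P + Q = 0)
    (zd : ℝ → Fin 2 → ℝ)
    (hzd : ∀ t, HasDerivAt zd (Ac.mulVec (zd t) + (αd ⬝ᵥ zd t + γd * yt) • Bc) t)
    (y dy : ℝ → Fin N → ℝ)
    (zbar : ℝ → Fin 2 → ℝ)
    (hzbar : ∀ t, zbar t = ![(N : ℝ)⁻¹ * ∑ j, y t j, (N : ℝ)⁻¹ * ∑ j, dy t j])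
    (u : ℝ → Fin N → ℝ)
    (hu : ∀ t i, u t i =
        (αd ⬝ᵥ zbar t + γd * yt - (1 / 2) * (Bc ⬝ᵥ P.mulVec (zbar t - zd t)))
        + ((N : ℝ)⁻¹ * (∑ j, y t j) - y t i)
        + η * ((N : ℝ)⁻¹ * (∑ j, dy t j) - dy t i)
        - yt * ((N : ℝ)⁻¹ - s i))
    (hy : ∀ i t, HasDerivAt (fun τ => y τ i) (dy t i) t)
    (hdy : ∀ i t, HasDerivAt (fun τ => dy τ i) (u t i) t) :
    Tendsto (fun t => zbar t - zd t) atTop (nhds 0) ∧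
    Tendsto (fun t =>
        ((1 : Matrix (Fin N) (Fin N) ℝ) - (N : ℝ)⁻¹ • vecMulVec 1 1).mulVec (y t))
      atTop
      (nhds (yt • ((1 : Matrix (Fin N) (Fin N) ℝ)
          - (N : ℝ)⁻¹ • vecMulVec 1 1).mulVec s)) := by
  have hNne : (N:ℝ) ≠ 0 := Nat.cast_ne_zero.2 hN.ne'
  -- average of the control inputs
  have husum : ∀ t, (N:ℝ)⁻¹ * ∑ j, u t j
      = αd ⬝ᵥ zbar t + γd * yt - (1/2) * (Bc ⬝ᵥ P.mulVec (zbar t - zd t)) := by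
    intro t
    rw [Finset.sum_congr rfl (fun j _ => hu t j)]
    simp only [Finset.sum_sub_distrib, Finset.sum_add_distrib, Finset.sum_const,
      Finset.card_univ, Fintype.card_fin, nsmul_eq_mul, ← Finset.mul_sum, hs]
    field_simp
    ring
  constructor
  · -- Part (i)
    set M1 : Matrix (Fin 2) (Fin 2) ℝ :=
      Ac + vecMulVec Bc αd - (1/2 : ℝ) • (vecMulVec Bc Bc * P) with hM1
    have hBBT : (vecMulVec Bc Bc)ᵀ = vecMulVec Bc Bc := by
      ext i j; simp [transpose_apply, vecMulVec_apply, mul_comm]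
    have hLyap1 : P * M1 + M1ᵀ * P = -Q := by
      have hT : M1ᵀ = (Ac + vecMulVec Bc αd)ᵀ - (1/2 : ℝ) • (P * vecMulVec Bc Bc) := by
        rw [hM1, transpose_sub, transpose_smul, transpose_mul, hBBT, hPsymm]
      have hR : P * (Ac + vecMulVec Bc αd) + (Ac + vecMulVec Bc αd)ᵀ * P
          - P * vecMulVec Bc Bc * P = -Q := eq_neg_of_add_eq_zero_left hRiccati
      rw [hM1, hT]
      calc P * (Ac + vecMulVec Bc αd - (1/2 : ℝ) • (vecMulVec Bc Bc * P))
            + ((Ac + vecMulVec Bc αd)ᵀ - (1/2 : ℝ) • (P * vecMulVec Bc Bc)) * P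
          = P * (Ac + vecMulVec Bc αd) + (Ac + vecMulVec Bc αd)ᵀ * P
            - P * vecMulVec Bc Bc * P := by
            rw [mul_sub, sub_mul, mul_smul_comm, smul_mul_assoc, mul_assoc]
            module
        _ = -Q := hR
    have hzder : ∀ t, HasDerivAt (fun τ => zbar τ - zd τ) (M1.mulVec (zbar t - zd t)) t := by
      intro t
      have hzf : zbar = fun τ => ![(N:ℝ)⁻¹ * ∑ j, y τ j, (N:ℝ)⁻¹ * ∑ j, dy τ j] :=
        funext hzbar
      have hz1 : HasDerivAt zbar
          (![(N:ℝ)⁻¹ * ∑ j, dy t j,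
             αd ⬝ᵥ zbar t + γd * yt - (1/2) * (Bc ⬝ᵥ P.mulVec (zbar t - zd t))]) t := by
        rw [hzf]
        apply hasDerivAt_pi.2
        intro i
        fin_cases i
        · simp only [Fin.zero_eta, Matrix.cons_val_zero]
          exact HasDerivAt.const_mul _ (HasDerivAt.fun_sum fun j _ => hy j t)
        · simp only [Fin.mk_one, Matrix.cons_val_one, Matrix.head_cons]
          rw [← hzbar t, ← husum t]
          exact HasDerivAt.const_mul _ (HasDerivAt.fun_sum fun j _ => hdy j t)
      have hder := hz1.sub (hzd t)
      refine hder.congr_deriv ?_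
      funext i
      have hzb := hzbar t
      fin_cases i <;>
      · simp [hM1, hAc, hBc, mulVec, dotProduct, Fin.sum_univ_two, vecMulVec_apply,
          Matrix.mul_apply, hzb, -cons_vecMulVec]
        try ring
    exact lyap_tendsto M1 P Q hP hQ hLyap1 _ hzder
  · -- Part (ii)
    set M2 : Matrix (Fin 2) (Fin 2) ℝ := !![0,1;-1,-η] with hM2
    set P2 : Matrix (Fin 2) (Fin 2) ℝ := !![1+η^2/2, η/2; η/2, 1] with hP2def
    set Q2 : Matrix (Fin 2) (Fin 2) ℝ := !![η,0;0,η] with hQ2def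
    have hP2 : P2.PosDef := by
      refine Matrix.PosDef.of_dotProduct_mulVec_pos ?_ ?_
      · ext i j; fin_cases i <;> fin_cases j <;> rfl
      · intro v hv
        have h01 : v 0 ≠ 0 ∨ v 1 ≠ 0 := by
          by_contra hc
          push_neg at hc
          exact hv (funext fun i => by fin_cases i <;> simp [hc.1, hc.2])
        simp [dotProduct, mulVec, Fin.sum_univ_two, hP2def]
        rcases h01 with h | h
        · nlinarith [sq_nonneg (η * v 0 / 2 + v 1), sq_nonneg (v 0), sq_nonneg (v 1),
            sq_pos_of_ne_zero h]
        · nlinarith [sq_nonneg (η * v 0 / 2 + v 1), sq_nonneg (v 0), sq_nonneg (v 1),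
            sq_pos_of_ne_zero h]
    have hQ2 : Q2.PosDef := by
      refine Matrix.PosDef.of_dotProduct_mulVec_pos ?_ ?_
      · ext i j; fin_cases i <;> fin_cases j <;> rfl
      · intro v hv
        have h01 : v 0 ≠ 0 ∨ v 1 ≠ 0 := by
          by_contra hc
          push_neg at hc
          exact hv (funext fun i => by fin_cases i <;> simp [hc.1, hc.2])
        simp [dotProduct, mulVec, Fin.sum_univ_two, hQ2def]
        rcases h01 with h | h
        · nlinarith [sq_nonneg (v 0), sq_nonneg (v 1), sq_pos_of_ne_zero h]
        · nlinarith [sq_nonneg (v 0), sq_nonneg (v 1), sq_pos_of_ne_zero h]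
    have hLyap2 : P2 * M2 + M2ᵀ * P2 = -Q2 := by
      have hT : M2ᵀ = !![0,-1;1,-η] := by
        ext i j; fin_cases i <;> fin_cases j <;> rfl
      rw [hT, hP2def, hM2, hQ2def]
      ext i j
      fin_cases i <;> fin_cases j <;>
        simp [Matrix.mul_apply, Fin.sum_univ_two] <;> ring
    have hPi : ∀ (v : Fin N → ℝ) (i : Fin N),
        ((1 - (N:ℝ)⁻¹ • vecMulVec (1 : Fin N → ℝ) 1).mulVec v) i
          = v i - (N:ℝ)⁻¹ * ∑ j, v j := by
      intro v i
      rw [sub_mulVec, one_mulVec]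
      simp [smul_mulVec, mulVec, vecMulVec_apply, dotProduct, Finset.mul_sum]
    apply tendsto_pi_nhds.2
    intro i
    set w : ℝ → Fin 2 → ℝ := fun t =>
      ![y t i - (N:ℝ)⁻¹ * ∑ j, y t j - yt * (s i - (N:ℝ)⁻¹),
        dy t i - (N:ℝ)⁻¹ * ∑ j, dy t j] with hw
    have hwder : ∀ t, HasDerivAt w (M2.mulVec (w t)) t := by
      intro t
      apply hasDerivAt_pi.2
      intro k
      fin_cases k
      · simp only [hw, Fin.zero_eta, Matrix.cons_val_zero]
        have hval : (M2.mulVec (w t)) 0 = dy t i - (N:ℝ)⁻¹ * ∑ j, dy t j := by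
          simp [hM2, hw, mulVec, dotProduct, Fin.sum_univ_two]
          try ring
        rw [hval]
        exact ((hy i t).sub (HasDerivAt.const_mul _
          (HasDerivAt.fun_sum fun j _ => hy j t))).sub_const _
      · simp only [hw, Fin.mk_one, Matrix.cons_val_one, Matrix.head_cons]
        have hval : (M2.mulVec (w t)) 1 = u t i - (N:ℝ)⁻¹ * ∑ j, u t j := by
          rw [hu t i, husum t]
          simp [hM2, hw, mulVec, dotProduct, Fin.sum_univ_two]
          try ring
        rw [hval]
        exact (hdy i t).sub (HasDerivAt.const_mul _
          (HasDerivAt.fun_sum fun j _ => hdy j t))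
    have htend := lyap_tendsto M2 P2 Q2 hP2 hQ2 hLyap2 w hwder
    have h0 : Tendsto (fun t => w t 0) atTop (nhds 0) := by
      have := (tendsto_pi_nhds.1 htend) 0
      simpa using this
    have hgoal := h0.add_const (yt * (s i - (N:ℝ)⁻¹))
    rw [zero_add] at hgoal
    have heq1 : (fun t => w t 0 + yt * (s i - (N:ℝ)⁻¹))
        = fun t => ((1 - (N:ℝ)⁻¹ • vecMulVec (1 : Fin N → ℝ) 1).mulVec (y t)) i := by
      funext t
      rw [hPi (y t) i]
      simp [hw]
    have heq2 : yt * (s i - (N:ℝ)⁻¹)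
        = (yt • ((1 : Matrix (Fin N) (Fin N) ℝ)
            - (N:ℝ)⁻¹ • vecMulVec 1 1).mulVec s) i := by
      rw [Pi.smul_apply, hPi s i, hs]
      simp [mul_one]
    rw [heq1, heq2] at hgoal
    exact hgoal
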